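/- In the Hitting-Set-to-plurality-DCUDC construction, if there exists a deletion set D ⊆ C \ {c} such that c is not a unique plurality winner of (C \ D, V), then B' = B \ D is a hitting set of S with |B'| ≤ k. -/

import Mathlib

/-!
Let `α` be the number of sets `S i` that `D` deletes entirely and `β` the number of deleted
`b_j`. The candidate `c` keeps the `2(m-k)+2n(k+1)+4` votes `c > w > ⋯` and gains `2(k+1)` votes
from each of the `α` sets. A rival `w` can collect at most its `2n(k+1)+5` own votes plus two per
deleted `b_j`; a rival `b_j` at most `2(k+1)` votes per set not deleted entirely, its own two
votes, and two per deleted `b_j'`. Either way a rival scoring at least as much as `c` forces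
`(m - k) + (k+1)α ≤ β ≤ m`, hence `α = 0` (so `B \ D` hits every `S i`) and `m - β ≤ k`.
-/

/-- Candidates for the Hitting-Set construction: `B = Fin m` together with the
two special candidates `c` and `w`. -/
abbrev HCand (m : ℕ) := Fin m ⊕ Bool

/-- The distinguished candidate `c`. -/
def hcand {m : ℕ} : HCand m := Sum.inr true

/-- The candidate `w`. -/
def hwand {m : ℕ} : HCand m := Sum.inr false

/-- The candidate `b_j`. -/
def hb {m : ℕ} (j : Fin m) : HCand m := Sum.inl j

/-- A vote is a preference list (most preferred first); its top choice after
deleting the candidates in `D` is the first surviving entry. -/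
def topAfter {C : Type*} [DecidableEq C] (D : Finset C) (l : List C) : Option C :=
  (l.filter (fun c => decide (c ∉ D))).head?

/-- Plurality score of candidate `c` after deleting `D`. -/
def plScore {C : Type*} [DecidableEq C] (votes : List (List C)) (D : Finset C)
    (c : C) : ℕ :=
  votes.countP (fun l => decide (topAfter D l = some c))

/-- Vote `c > w > ⋯`. -/
def hv1 (m : ℕ) : List (HCand m) := [hcand, hwand] ++ (List.finRange m).map hb

/-- Vote `w > c > ⋯`. -/
def hv2 (m : ℕ) : List (HCand m) := [hwand, hcand] ++ (List.finRange m).map hb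

/-- Vote `S_i > c > ⋯` (members of `S_i`, then `c`, then the rest). -/
noncomputable def hv3 {m n : ℕ} (S : Fin n → Finset (Fin m)) (i : Fin n) :
    List (HCand m) :=
  ((S i).toList.map hb) ++ [hcand] ++
    (Finset.univ.toList.filter
      (fun x : HCand m => decide (x ∉ ((S i).image hb ∪ {hcand}))))

/-- Vote `b_j > w > ⋯`. -/
noncomputable def hv4 {m : ℕ} (j : Fin m) : List (HCand m) :=
  [hb j, hwand] ++
    (Finset.univ.toList.filter
      (fun x : HCand m => decide (x ∉ ({hb j, hwand} : Finset (HCand m)))))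

/-- The votes of the constructed election: `2(m-k)+2n(k+1)+4` votes `c > w > ⋯`,
`2n(k+1)+5` votes `w > c > ⋯`, for each `i` `2(k+1)` votes `S_i > c > ⋯`, and
for each `j` two votes `b_j > w > ⋯`. -/
noncomputable def hsVotes {m n : ℕ} (S : Fin n → Finset (Fin m)) (k : ℕ) :
    List (List (HCand m)) :=
  List.replicate (2 * (m - k) + 2 * n * (k + 1) + 4) (hv1 m) ++
    List.replicate (2 * n * (k + 1) + 5) (hv2 m) ++
    (((List.finRange n).map (fun i => List.replicate (2 * (k + 1)) (hv3 S i))).flatten) ++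
    (((List.finRange m).map (fun j => List.replicate 2 (hv4 j))).flatten)

open Finset

section Plurality

variable {C : Type*} [DecidableEq C] {D : Finset C} {l l₁ l₂ : List C} {x y : C}

lemma topAfter_cons (a : C) (l : List C) :
    topAfter D (a :: l) = if a ∈ D then topAfter D l else some a := by
  by_cases h : a ∈ D <;> simp [topAfter, h]

lemma topAfter_append_of_mem (hy : y ∈ l₁) (hyD : y ∉ D) :
    topAfter D (l₁ ++ l₂) = topAfter D l₁ := by
  have : l₁.filter (fun c => decide (c ∉ D)) ≠ [] :=
    List.ne_nil_of_mem (List.mem_filter.2 ⟨hy, by simpa using hyD⟩)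
  simp only [topAfter, List.filter_append, List.head?_append_of_ne_nil _ this]

lemma topAfter_append_of_subset (h : ∀ y ∈ l₁, y ∈ D) :
    topAfter D (l₁ ++ l₂) = topAfter D l₂ := by
  have : l₁.filter (fun c => decide (c ∉ D)) = [] := by
    simpa [List.filter_eq_nil_iff] using h
  simp only [topAfter, List.filter_append, this, List.nil_append]

lemma mem_of_topAfter_eq_some (h : topAfter D l = some x) : x ∈ l ∧ x ∉ D := by
  simpa using List.mem_filter.1 (List.mem_of_mem_head? h)

lemma plScore_append (V₁ V₂ : List (List C)) (D : Finset C) (x : C) :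
    plScore (V₁ ++ V₂) D x = plScore V₁ D x + plScore V₂ D x :=
  List.countP_append ..

lemma plScore_replicate (r : ℕ) (l : List C) (D : Finset C) (x : C) :
    plScore (List.replicate r l) D x = if topAfter D l = some x then r else 0 := by
  simp [plScore, List.countP_replicate]

lemma plScore_flatten_replicate {N : ℕ} (r : ℕ) (f : Fin N → List C) (D : Finset C) (x : C) :
    plScore ((List.finRange N).map fun i => List.replicate r (f i)).flatten D x =
      r * #{i | topAfter D (f i) = some x} := by
  rw [plScore, List.countP_flatten, List.map_map, card_filter, mul_sum,
    Fin.sum_univ_def]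
  congr 1
  refine List.map_congr_left fun i _ => ?_
  simp [List.countP_replicate]

end Plurality

section Construction

variable {m n : ℕ}

@[simp] lemma hb_ne_hcand (j : Fin m) : hb j ≠ hcand := Sum.inl_ne_inr
@[simp] lemma hb_ne_hwand (j : Fin m) : hb j ≠ hwand := Sum.inl_ne_inr
@[simp] lemma hwand_ne_hcand : (hwand : HCand m) ≠ hcand := by simp [hwand, hcand]
@[simp] lemma hb_inj {i j : Fin m} : hb i = hb j ↔ i = j := Sum.inl_injective.eq_iff

lemma eq_hwand_or_exists_eq_hb {d : HCand m} (hdc : d ≠ hcand) : d = hwand ∨ ∃ j, d = hb j := by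
  rcases d with j | _ | _
  · exact Or.inr ⟨j, rfl⟩
  · exact Or.inl rfl
  · exact absurd rfl hdc

variable {D : Finset (HCand m)} {x : HCand m}

lemma topAfter_hv1 (hcD : hcand ∉ D) : topAfter D (hv1 m) = some hcand := by
  rw [hv1, List.cons_append, topAfter_cons, if_neg hcD]

lemma eq_hwand_or_eq_hcand_of_topAfter_hv2 (hcD : hcand ∉ D)
    (h : topAfter D (hv2 m) = some x) : x = hwand ∨ x = hcand := by
  rw [hv2, topAfter_append_of_mem (by simp) hcD] at h
  simpa using (mem_of_topAfter_eq_some h).1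

lemma topAfter_hv3_of_subset (S : Fin n → Finset (Fin m)) {i : Fin n} (hcD : hcand ∉ D)
    (hS : ∀ j ∈ S i, hb j ∈ D) : topAfter D (hv3 S i) = some hcand := by
  rw [hv3, List.append_assoc, topAfter_append_of_subset (by simpa using hS), List.cons_append,
    topAfter_cons, if_neg hcD]

lemma eq_hcand_or_alive_of_topAfter_hv3 (S : Fin n → Finset (Fin m)) {i : Fin n}
    (hcD : hcand ∉ D) (h : topAfter D (hv3 S i) = some x) :
    x = hcand ∨ ∃ j ∈ S i, hb j ∉ D ∧ x = hb j := by
  rw [hv3, topAfter_append_of_mem (by simp) hcD] at h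
  obtain ⟨hx, hxD⟩ := mem_of_topAfter_eq_some h
  simp only [List.mem_append, List.mem_map, mem_toList, List.mem_singleton] at hx
  rcases hx with ⟨j, hj, rfl⟩ | rfl
  · exact Or.inr ⟨j, hj, hxD, rfl⟩
  · exact Or.inl rfl

lemma eq_hb_or_mem_of_topAfter_hv4 {j : Fin m} (h : topAfter D (hv4 j) = some x) :
    x = hb j ∨ hb j ∈ D := by
  by_cases hj : hb j ∈ D
  · exact Or.inr hj
  · rw [hv4, List.cons_append, topAfter_cons, if_neg hj] at h
    exact Or.inl (Option.some_injective _ h).symm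

end Construction

section Scores

variable {m n : ℕ} (S : Fin n → Finset (Fin m)) (k : ℕ) {D : Finset (HCand m)}

lemma plScore_hsVotes (D : Finset (HCand m)) (x : HCand m) :
    plScore (hsVotes S k) D x =
      (if topAfter D (hv1 m) = some x then 2 * (m - k) + 2 * n * (k + 1) + 4 else 0) +
      (if topAfter D (hv2 m) = some x then 2 * n * (k + 1) + 5 else 0) +
      2 * (k + 1) * #{i | topAfter D (hv3 S i) = some x} +
      2 * #{j | topAfter D (hv4 j) = some x} := by
  simp only [hsVotes, plScore_append, plScore_replicate, plScore_flatten_replicate]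

lemma plScore_hcand_ge (hcD : hcand ∉ D) :
    2 * (m - k) + 2 * n * (k + 1) + 4 + 2 * (k + 1) * #{i | ∀ j ∈ S i, hb j ∈ D} ≤
      plScore (hsVotes S k) D hcand := by
  have hv3_ge : #{i | ∀ j ∈ S i, hb j ∈ D} ≤ #{i | topAfter D (hv3 S i) = some hcand} :=
    card_le_card <| monotone_filter_right _ fun i _ => topAfter_hv3_of_subset S hcD
  have := Nat.mul_le_mul_left (2 * (k + 1)) hv3_ge
  rw [plScore_hsVotes, if_pos (topAfter_hv1 hcD)]
  omega

lemma plScore_hwand_le (hcD : hcand ∉ D) :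
    plScore (hsVotes S k) D hwand ≤ 2 * n * (k + 1) + 5 + 2 * #{j | hb j ∈ D} := by
  have hv1_ne : topAfter D (hv1 m) ≠ some hwand := by
    rw [topAfter_hv1 hcD, Ne, Option.some_inj]; exact hwand_ne_hcand.symm
  have hv3_zero : #{i | topAfter D (hv3 S i) = some hwand} = 0 := by
    refine card_eq_zero.2 (filter_eq_empty_iff.2 fun i _ h => ?_)
    rcases eq_hcand_or_alive_of_topAfter_hv3 S hcD h with h | ⟨j, -, -, h⟩
    · exact hwand_ne_hcand h
    · exact hb_ne_hwand j h.symm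
  have hv4_le : #{j | topAfter D (hv4 j) = some hwand} ≤ #{j | hb j ∈ D} :=
    card_le_card <| monotone_filter_right _ fun j _ h =>
      (eq_hb_or_mem_of_topAfter_hv4 h).resolve_left (hb_ne_hwand j).symm
  rw [plScore_hsVotes, if_neg hv1_ne, hv3_zero]
  split <;> omega

lemma plScore_hb_le (hcD : hcand ∉ D) (j : Fin m) :
    plScore (hsVotes S k) D (hb j) ≤
      2 * (k + 1) * #{i | ¬ ∀ j ∈ S i, hb j ∈ D} + 2 * (1 + #{j | hb j ∈ D}) := by
  have hv1_ne : topAfter D (hv1 m) ≠ some (hb j) := by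
    rw [topAfter_hv1 hcD, Ne, Option.some_inj]; exact (hb_ne_hcand j).symm
  have hv2_ne : topAfter D (hv2 m) ≠ some (hb j) := fun h => by
    rcases eq_hwand_or_eq_hcand_of_topAfter_hv2 hcD h with h | h
    · exact hb_ne_hwand j h
    · exact hb_ne_hcand j h
  have hv3_le : #{i | topAfter D (hv3 S i) = some (hb j)} ≤ #{i | ¬ ∀ j ∈ S i, hb j ∈ D} := by
    refine card_le_card <| monotone_filter_right _ fun i _ h hS => ?_
    rw [topAfter_hv3_of_subset S hcD hS] at h
    exact hb_ne_hcand j (Option.some_injective _ h).symm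
  have hv4_le : #{j' | topAfter D (hv4 j') = some (hb j)} ≤ 1 + #{j | hb j ∈ D} :=
    calc #{j' | topAfter D (hv4 j') = some (hb j)}
        ≤ #(insert j ({j' | hb j' ∈ D} : Finset (Fin m))) := card_le_card fun j' hj' => by
          rcases eq_hb_or_mem_of_topAfter_hv4 (mem_filter.1 hj').2 with h | h
          · simp [hb_inj.1 h.symm]
          · simp [h]
      _ ≤ 1 + #{j | hb j ∈ D} := by rw [add_comm]; exact card_insert_le _ _
  have := Nat.mul_le_mul_left (2 * (k + 1)) hv3_le
  rw [plScore_hsVotes, if_neg hv1_ne, if_neg hv2_ne]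
  omega

end Scores

lemma sub_add_mul_card_le_of_plScore_hcand_le {m n : ℕ} (S : Fin n → Finset (Fin m)) (k : ℕ)
    {D : Finset (HCand m)} (hcD : hcand ∉ D) {d : HCand m} (hdc : d ≠ hcand)
    (hd : plScore (hsVotes S k) D hcand ≤ plScore (hsVotes S k) D d) :
    m - k + (k + 1) * #{i | ∀ j ∈ S i, hb j ∈ D} ≤ #{j | hb j ∈ D} := by
  have hc := plScore_hcand_ge S k hcD
  have hassoc := mul_assoc 2 (k + 1) #{i | ∀ j ∈ S i, hb j ∈ D}
  rcases eq_hwand_or_exists_eq_hb hdc with rfl | ⟨j, rfl⟩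
  · have := plScore_hwand_le S k hcD
    omega
  · have hsplit : 2 * (k + 1) * #{i | ∀ j ∈ S i, hb j ∈ D} +
        2 * (k + 1) * #{i | ¬ ∀ j ∈ S i, hb j ∈ D} = 2 * n * (k + 1) := by
      rw [← mul_add, card_filter_add_card_filter_not, card_univ, Fintype.card_fin]
      ring
    have := plScore_hb_le S k hcD j
    omega

theorem stmt13_general {m n : ℕ} (S : Fin n → Finset (Fin m))
    (k : ℕ)
    (D : Finset (HCand m)) (hcD : hcand ∉ D)
    (hnotwin : ¬ ∀ d : HCand m, d ≠ hcand → d ∉ D →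
      plScore (hsVotes S k) D d < plScore (hsVotes S k) D hcand) :
    (∀ i, ∃ j, j ∈ S i ∧ hb j ∉ D) ∧
    (Finset.univ.filter (fun j : Fin m => hb j ∉ D)).card ≤ k := by
  push Not at hnotwin
  obtain ⟨d, hdc, -, hd⟩ := hnotwin
  have hkey := sub_add_mul_card_le_of_plScore_hcand_le S k hcD hdc hd
  have hsplit : #{j | hb j ∈ D} + #{j | hb j ∉ D} = m := by
    rw [card_filter_add_card_filter_not, card_univ, Fintype.card_fin]
  have hnone : #{i | ∀ j ∈ S i, hb j ∈ D} = 0 := by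
    by_contra h
    have := Nat.le_mul_of_pos_right (k + 1) (Nat.pos_of_ne_zero h)
    omega
  refine ⟨fun i => ?_, by omega⟩
  simpa using filter_eq_empty_iff.1 (card_eq_zero.1 hnone) (mem_univ i)

/-- In the Hitting-Set-to-plurality-DCUDC construction, if there is a deletion
set `D ⊆ C \ {c}` such that `c` is not a unique plurality winner of
`(C \ D, V)`, then `B' = B \ D` is a hitting set of `S` of size at most `k`. -/
theorem stmt13 {m n : ℕ} (S : Fin n → Finset (Fin m))
    (k : ℕ) (hk : 0 < k) (hkm : k ≤ m)
    (D : Finset (HCand m)) (hcD : hcand ∉ D)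
    (hnotwin : ¬ ∀ d : HCand m, d ≠ hcand → d ∉ D →
      plScore (hsVotes S k) D d < plScore (hsVotes S k) D hcand) :
    (∀ i, ∃ j, j ∈ S i ∧ hb j ∉ D) ∧
    (Finset.univ.filter (fun j : Fin m => hb j ∉ D)).card ≤ k :=
  stmt13_general S k D hcD hnotwin
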